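/- Let λ>0, ρ(x)=λ^{-1}·exp(-x/λ) for x≥0, and for a>2 set ν_a(t)=-λ·a·ln(1-t) on [0,1). Then for every f∈F_{1,∞}(ℝ_+), the function g_{f,ν_a}(t)=f(ν_a(t))ρ(ν_a(t))ν_a'(t) satisfies g_{f,ν_a}(0)=0 and ess sup_{t∈(0,1)} |g_{f,ν_a}'(t)| ≤ a²·λ·(1 + (a-1)/((a-2)·e))·‖f'‖_{L_∞(0,∞)}. Moreover, the function a ↦ a²·(1 + (a-1)/((a-2)·e)) on (2,∞) attains its minimum at a* = 2 + 4/(√(17+16e)+1). -/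

import Mathlib

/-!
Substituting `ν = ν_a` into the exponential density gives
`ρ(ν t) ν'(t) = a (1 - t) ^ (a - 1) =: P t`, so `g = P · (f ∘ ν)` on `[0, 1)`. Since
`|f'| ≤ K := ‖f'‖_∞` a.e., `f` is `K`-Lipschitz on `[0, ∞)`, so `f ∘ ν` is absolutely continuous
on every `[0, t]`, `t < 1`, and the product rule for absolutely continuous functions represents `g`
as the integral of `g' = P' · (f ∘ ν) + P · (f ∘ ν)'`. Pointwise `|f (ν s)| ≤ K ν s` and
`|(f ∘ ν)' s| ≤ K ν' s`, and the two resulting terms are bounded by `(1 - s) ^ (a - 2) ≤ 1` and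
`(1 - s) ^ (a - 2) · (-log (1 - s)) ≤ 1 / ((a - 2) e)`, which is `y e^{-y} ≤ e^{-1}`.
-/

open MeasureTheory Set ENNReal Filter Topology

theorem Real.rpow_mul_neg_log_le {q c : ℝ} (hq : 0 < q) (hc : 0 < c) :
    q ^ c * -Real.log q ≤ 1 / (c * Real.exp 1) :=
  calc q ^ c * -Real.log q
      = c * -Real.log q * Real.exp (-(c * -Real.log q)) / c := by
        rw [Real.rpow_def_of_pos hq]; field_simp
    _ ≤ Real.exp (-1) / c := by gcongr; exact Real.mul_exp_neg_le_exp_neg_one _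
    _ = 1 / (c * Real.exp 1) := by rw [Real.exp_neg]; field_simp

theorem ae_nnnorm_le_toNNReal_eLpNorm_top {α E : Type*} [MeasurableSpace α]
    [NormedAddCommGroup E] {μ : Measure α} {f : α → E} (hf : eLpNorm f ⊤ μ ≠ ⊤) :
    ∀ᵐ x ∂μ, ‖f x‖₊ ≤ (eLpNorm f ⊤ μ).toNNReal := by
  filter_upwards [ae_le_eLpNormEssSup (f := f) (μ := μ)] with x hx
  rw [← ENNReal.coe_le_coe, ENNReal.coe_toNNReal hf, eLpNorm_exponent_top]
  exact hx

theorem lipschitzOnWith_Ici_of_eq_intervalIntegral {f f' : ℝ → ℝ} {c : ℝ} {K : NNReal}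
    (hint : ∀ x, c < x → IntervalIntegrable f' volume c x)
    (hrepr : ∀ x, c ≤ x → f x = ∫ s in c..x, f' s)
    (hbound : ∀ᵐ x ∂(volume.restrict (Ioi c)), ‖f' x‖₊ ≤ K) :
    LipschitzOnWith K f (Ici c) := by
  have hint' : ∀ x, c ≤ x → IntervalIntegrable f' volume c x := fun x hx =>
    hx.eq_or_lt.elim (fun h => h ▸ .refl) (hint x)
  refine LipschitzOnWith.of_dist_le_mul fun x hx y hy => ?_
  rw [Real.dist_eq, Real.dist_eq, hrepr x hx, hrepr y hy,
    intervalIntegral.integral_interval_sub_left (hint' x hx) (hint' y hy), ← Real.norm_eq_abs]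
  refine intervalIntegral.norm_integral_le_of_norm_le_const_ae ?_
  rw [ae_restrict_iff' measurableSet_Ioi] at hbound
  filter_upwards [hbound] with s hs hmem
  exact hs (lt_of_le_of_lt (le_min hy hx) hmem.1)

theorem abs_deriv_comp_le_of_lipschitzOnWith {f ν : ℝ → ℝ} {K : NNReal} {s : Set ℝ} {x ν' : ℝ}
    (hf : LipschitzOnWith K f s) (hν : HasDerivAt ν ν' x) (hmaps : ∀ᶠ y in 𝓝 x, ν y ∈ s) :
    |deriv (f ∘ ν) x| ≤ K * |ν'| := by
  by_cases hd : DifferentiableAt ℝ (f ∘ ν) x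
  · have hslope := (hasDerivAt_iff_tendsto_slope.mp hd.hasDerivAt).abs
    have hνslope := (hasDerivAt_iff_tendsto_slope.mp hν).abs.const_mul (K : ℝ)
    refine le_of_tendsto_of_tendsto hslope hνslope ?_
    filter_upwards [nhdsWithin_le_nhds hmaps] with y hy
    rw [slope_def_field, slope_def_field, abs_div, abs_div, ← mul_div_assoc]
    gcongr
    simpa only [Function.comp_apply, Real.dist_eq] using
      hf.dist_le_mul _ hy _ hmaps.self_of_nhds
  · rw [deriv_zero_of_not_differentiableAt hd, abs_zero]
    positivity

theorem absolutelyContinuousOnInterval_comp_of_lipschitzOnWith {f ν : ℝ → ℝ} {K : NNReal}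
    {s : Set ℝ} {a b : ℝ} (hf : LipschitzOnWith K f s) (hν : ContDiffOn ℝ 1 ν (uIcc a b))
    (hmaps : MapsTo ν (uIcc a b) s) : AbsolutelyContinuousOnInterval (f ∘ ν) a b := by
  obtain ⟨L, hν_lip⟩ := hν.exists_lipschitzOnWith one_ne_zero (convex_uIcc a b) isCompact_uIcc
  exact (hf.comp hν_lip hmaps).absolutelyContinuousOnInterval

theorem AbsolutelyContinuousOnInterval.intervalIntegrable_deriv_mul_add {f g : ℝ → ℝ} {a b : ℝ}
    (hf : AbsolutelyContinuousOnInterval f a b) (hg : AbsolutelyContinuousOnInterval g a b) :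
    IntervalIntegrable (fun x => deriv f x * g x + f x * deriv g x) volume a b :=
  (hf.intervalIntegrable_deriv.mul_continuousOn hg.continuousOn).add
    (hg.intervalIntegrable_deriv.continuousOn_mul hf.continuousOn)

/-- The paper's `ν_a = a Φ_ρ⁻¹` for the exponential density of mean `lam`. -/
noncomputable def scaledExpQuantile (lam a t : ℝ) : ℝ :=
  -(lam * a) * Real.log (1 - t)

section ScaledExpQuantile

variable {lam a t : ℝ}

@[simp]
theorem scaledExpQuantile_zero : scaledExpQuantile lam a 0 = 0 := by
  simp [scaledExpQuantile]

theorem hasDerivAt_scaledExpQuantile (ht : t < 1) :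
    HasDerivAt (scaledExpQuantile lam a) (lam * a / (1 - t)) t := by
  have := (((hasDerivAt_id t).const_sub 1).log (sub_ne_zero.mpr ht.ne')).const_mul (-(lam * a))
  refine this.congr_deriv ?_
  rw [id]
  field_simp

theorem contDiffOn_scaledExpQuantile (lam a : ℝ) {n : WithTop ℕ∞} :
    ContDiffOn ℝ n (scaledExpQuantile lam a) (Iio 1) :=
  contDiffOn_const.mul ((contDiffOn_const.sub contDiffOn_id).log fun _ hx =>
    sub_ne_zero.mpr (ne_of_gt hx))

theorem mapsTo_scaledExpQuantile (h : 0 ≤ lam * a) :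
    MapsTo (scaledExpQuantile lam a) (Ico 0 1) (Ici 0) := fun t ht => by
  have := Real.log_nonpos (sub_nonneg.mpr ht.2.le) (by linarith [ht.1])
  exact mul_nonneg_of_nonpos_of_nonpos (neg_nonpos.mpr h) this

theorem exp_density_scaledExpQuantile_mul_deriv (hlam : 0 < lam) (ht : t < 1) :
    lam⁻¹ * Real.exp (-scaledExpQuantile lam a t / lam) * (lam * a / (1 - t)) =
      a * (1 - t) ^ (a - 1) := by
  have h1t : 0 < 1 - t := sub_pos.mpr ht
  rw [scaledExpQuantile, show -(-(lam * a) * Real.log (1 - t)) / lam = Real.log (1 - t) * a by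
    field_simp, ← Real.rpow_def_of_pos h1t, Real.rpow_sub h1t, Real.rpow_one]
  field_simp

theorem contDiff_mul_one_sub_rpow (ha : 2 ≤ a) : ContDiff ℝ 1 fun t => a * (1 - t) ^ (a - 1) :=
  contDiff_const.mul ((Real.contDiff_rpow_const_of_le (n := 1) (by push_cast; linarith)).comp
    (contDiff_const.sub contDiff_id))

theorem hasDerivAt_mul_one_sub_rpow (a : ℝ) (ht : t < 1) :
    HasDerivAt (fun t => a * (1 - t) ^ (a - 1)) (-(a * (a - 1) * (1 - t) ^ (a - 2))) t := by
  have := (((hasDerivAt_id t).const_sub 1).rpow_const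
    (p := a - 1) (Or.inl (sub_ne_zero.mpr ht.ne'))).const_mul a
  refine this.congr_deriv ?_
  rw [id, show a - 1 - 1 = a - 2 by ring]
  ring

theorem abs_deriv_product_le_of_abs_le (hlam : 0 < lam) (ha : 2 < a) (ht : t ∈ Ioo 0 1) {K : NNReal}
    {D E : ℝ} (hD : |D| ≤ K * scaledExpQuantile lam a t) (hE : |E| ≤ K * (lam * a / (1 - t))) :
    |-(a * (a - 1) * (1 - t) ^ (a - 2)) * D + a * (1 - t) ^ (a - 1) * E| ≤
      a ^ 2 * lam * (1 + (a - 1) / ((a - 2) * Real.exp 1)) * K := by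
  have h1t : 0 < 1 - t := sub_pos.mpr ht.2
  have hpow_le : (1 - t) ^ (a - 2) ≤ 1 := Real.rpow_le_one h1t.le (by linarith [ht.1]) (by linarith)
  have hpow_log_le := Real.rpow_mul_neg_log_le h1t (sub_pos.mpr ha)
  have hpow_succ : (1 - t) ^ (a - 1) = (1 - t) ^ (a - 2) * (1 - t) := by
    rw [← Real.rpow_add_one h1t.ne']; ring_nf
  have hA : 0 ≤ a * (a - 1) * (1 - t) ^ (a - 2) :=
    mul_nonneg (mul_nonneg (by linarith) (by linarith)) (Real.rpow_nonneg h1t.le _)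
  have hB : 0 ≤ a * (1 - t) ^ (a - 1) := mul_nonneg (by linarith) (Real.rpow_nonneg h1t.le _)
  have : 0 ≤ a - 1 := by linarith
  calc |-(a * (a - 1) * (1 - t) ^ (a - 2)) * D + a * (1 - t) ^ (a - 1) * E|
      ≤ a * (a - 1) * (1 - t) ^ (a - 2) * |D| + a * (1 - t) ^ (a - 1) * |E| := by
        refine (abs_add_le _ _).trans_eq ?_
        rw [abs_mul, abs_mul, abs_neg, abs_of_nonneg hA, abs_of_nonneg hB]
    _ ≤ a * (a - 1) * (1 - t) ^ (a - 2) * (K * scaledExpQuantile lam a t) +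
          a * (1 - t) ^ (a - 1) * (K * (lam * a / (1 - t))) := by
        gcongr
    _ = a ^ 2 * lam * K *
          ((a - 1) * ((1 - t) ^ (a - 2) * -Real.log (1 - t)) + (1 - t) ^ (a - 2)) := by
        rw [hpow_succ, scaledExpQuantile]; field_simp
    _ ≤ a ^ 2 * lam * K * ((a - 1) * (1 / ((a - 2) * Real.exp 1)) + 1) := by
        gcongr
    _ = a ^ 2 * lam * (1 + (a - 1) / ((a - 2) * Real.exp 1)) * K := by ring

theorem abs_deriv_mul_comp_scaledExpQuantile_le (hlam : 0 < lam) (ha : 2 < a) {f : ℝ → ℝ}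
    {K : NNReal} (hf : LipschitzOnWith K f (Ici 0)) (hf0 : f 0 = 0) (ht : t ∈ Ioo 0 1) :
    |deriv (fun t => a * (1 - t) ^ (a - 1)) t * f (scaledExpQuantile lam a t) +
        a * (1 - t) ^ (a - 1) * deriv (f ∘ scaledExpQuantile lam a) t| ≤
      a ^ 2 * lam * (1 + (a - 1) / ((a - 2) * Real.exp 1)) * K := by
  have hmaps := mapsTo_scaledExpQuantile (lam := lam) (a := a) (by positivity)
  have hν_t := hmaps (Ioo_subset_Ico_self ht)
  have hf_ν : |f (scaledExpQuantile lam a t)| ≤ K * scaledExpQuantile lam a t := by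
    simpa [Real.dist_eq, hf0, abs_of_nonneg (mem_Ici.mp hν_t)] using
      hf.dist_le_mul _ hν_t 0 self_mem_Ici
  have hν_near : ∀ᶠ y in 𝓝 t, scaledExpQuantile lam a y ∈ Ici 0 :=
    mem_of_superset (Ioo_mem_nhds ht.1 ht.2) fun y hy => hmaps (Ioo_subset_Ico_self hy)
  have hfν_deriv : |deriv (f ∘ scaledExpQuantile lam a) t| ≤ K * (lam * a / (1 - t)) := by
    have h1t : 0 < 1 - t := sub_pos.mpr ht.2
    simpa [abs_of_pos (by positivity : 0 < lam * a / (1 - t))] using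
      abs_deriv_comp_le_of_lipschitzOnWith hf (hasDerivAt_scaledExpQuantile ht.2) hν_near
  rw [(hasDerivAt_mul_one_sub_rpow a ht.2).deriv]
  exact abs_deriv_product_le_of_abs_le hlam ha ht hf_ν hfν_deriv

end ScaledExpQuantile

noncomputable def expScaleConstant (b : ℝ) : ℝ :=
  b ^ 2 * (1 + (b - 1) / ((b - 2) * Real.exp 1))

noncomputable def optimalExpScale : ℝ :=
  2 + 4 / (Real.sqrt (17 + 16 * Real.exp 1) + 1)

theorem two_lt_optimalExpScale : 2 < optimalExpScale := by
  unfold optimalExpScale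
  have : 0 < 4 / (Real.sqrt (17 + 16 * Real.exp 1) + 1) := by positivity
  linarith

/-- `h'(2 + c) = 0` for `h = expScaleConstant` reads `2 (e + 1) c² + c - 2 = 0` once denominators
are cleared; its positive root is `4 / (√(17 + 16 e) + 1)`. -/
theorem optimalExpScale_sub_two_isRoot :
    2 * (Real.exp 1 + 1) * (optimalExpScale - 2) ^ 2 + (optimalExpScale - 2) - 2 = 0 := by
  unfold optimalExpScale
  have hs : Real.sqrt (17 + 16 * Real.exp 1) ^ 2 = 17 + 16 * Real.exp 1 :=
    Real.sq_sqrt (by positivity)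
  set s := Real.sqrt (17 + 16 * Real.exp 1)
  have : 0 ≤ s := Real.sqrt_nonneg _
  field_simp
  nlinarith

theorem isMinOn_expScaleConstant : IsMinOn expScaleConstant (Ioi 2) optimalExpScale := by
  refine isMinOn_iff.mpr fun b (hb : 2 < b) => sub_nonneg.mp ?_
  have hroot := optimalExpScale_sub_two_isRoot
  set c := optimalExpScale - 2
  have hc0 : 0 < c := sub_pos.mpr two_lt_optimalExpScale
  have hb0 : 0 < b - 2 := sub_pos.mpr hb
  -- the term linear in `b - 2 - c` carries the critical-point equation as a factor
  have hexpand : expScaleConstant b - expScaleConstant optimalExpScale =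
      ((b - 2 - c) ^ 2 * c * ((Real.exp 1 + 1) * ((b - 2) + 2 * c) + 4 * Real.exp 1 + 5)
        + (b - 2 - c) * (c + 2) * (2 * (Real.exp 1 + 1) * c ^ 2 + c - 2)) /
        (c * (b - 2) * Real.exp 1) := by
    rw [show optimalExpScale = c + 2 by ring]
    unfold expScaleConstant
    rw [add_sub_cancel_right]
    have := hc0.ne'
    have := hb0.ne'
    field_simp
    ring
  rw [hexpand, hroot, mul_zero, add_zero]
  positivity

/-- Let `λ > 0`, `ρ(x) = λ⁻¹ e^{-x/λ}`, and for `a > 2` let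
`ν_a(t) = -λ a ln(1-t)` on `[0,1)`.  For every `f ∈ F_{1,∞}(ℝ₊)` the function
`g_{f,ν_a}(t) = f(ν_a(t)) ρ(ν_a(t)) ν_a'(t)` satisfies `g(0) = 0` and (as an element of
`W_{1,∞}`, via its weak derivative `g'`)
`ess sup_{t∈(0,1)} |g'(t)| ≤ a² λ (1 + (a-1)/((a-2)e)) ‖f'‖_{L_∞(0,∞)}`.
Moreover, `a ↦ a² (1 + (a-1)/((a-2)e))` attains its minimum on `(2,∞)` at
`a* = 2 + 4/(√(17+16e)+1)`. -/
theorem exponential_density_W1infty_bound_and_optimal_a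
    (lam : ℝ) (hlam : 0 < lam)
    (ρ : ℝ → ℝ) (hρ : ∀ x, ρ x = lam⁻¹ * Real.exp (-x / lam))
    (a : ℝ) (ha : 2 < a)
    (ν ν' : ℝ → ℝ)
    (hν : ∀ t, ν t = -(lam * a) * Real.log (1 - t))
    (hν' : ∀ t, ν' t = lam * a / (1 - t))
    (f f' : ℝ → ℝ)
    (hf0 : f 0 = 0)
    (hf_int : ∀ x, 0 < x → IntervalIntegrable f' volume 0 x)
    (hf_repr : ∀ x, 0 ≤ x → f x = ∫ s in (0:ℝ)..x, f' s)
    (hf'Linf : MemLp f' ⊤ (volume.restrict (Ioi 0)))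
    (g : ℝ → ℝ) (hg : ∀ t, g t = f (ν t) * ρ (ν t) * ν' t) :
    (g 0 = 0 ∧
      ∃ g' : ℝ → ℝ,
        (∀ t ∈ Ico (0:ℝ) 1, IntervalIntegrable g' volume 0 t ∧
          g t = ∫ s in (0:ℝ)..t, g' s) ∧
        eLpNorm g' ⊤ (volume.restrict (Ioo (0:ℝ) 1)) ≤
          ENNReal.ofReal (a ^ 2 * lam * (1 + (a - 1) / ((a - 2) * Real.exp 1))) *
            eLpNorm f' ⊤ (volume.restrict (Ioi 0))) ∧
    ((2 + 4 / (Real.sqrt (17 + 16 * Real.exp 1) + 1)) ∈ Ioi (2:ℝ) ∧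
      ∀ b ∈ Ioi (2:ℝ),
      (2 + 4 / (Real.sqrt (17 + 16 * Real.exp 1) + 1)) ^ 2 *
          (1 + ((2 + 4 / (Real.sqrt (17 + 16 * Real.exp 1) + 1)) - 1) /
            (((2 + 4 / (Real.sqrt (17 + 16 * Real.exp 1) + 1)) - 2) * Real.exp 1)) ≤
        b ^ 2 * (1 + (b - 1) / ((b - 2) * Real.exp 1))) := by
  refine ⟨?_, two_lt_optimalExpScale, isMinOn_iff.mp isMinOn_expScaleConstant⟩
  obtain rfl : ν = scaledExpQuantile lam a := funext hν
  set P : ℝ → ℝ := fun t => a * (1 - t) ^ (a - 1)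
  set K := (eLpNorm f' ⊤ (volume.restrict (Ioi 0))).toNNReal
  have hf_lip : LipschitzOnWith K f (Ici 0) := lipschitzOnWith_Ici_of_eq_intervalIntegral
    hf_int hf_repr (ae_nnnorm_le_toNNReal_eLpNorm_top hf'Linf.eLpNorm_ne_top)
  have hg_eq : ∀ t < 1, g t = P t * f (scaledExpQuantile lam a t) := fun t ht => by
    rw [hg, hρ, hν', mul_assoc, exp_density_scaledExpQuantile_mul_deriv hlam ht, mul_comm]
  refine ⟨by simp [hg_eq, hf0], fun s => deriv P s * f (scaledExpQuantile lam a s) +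
    P s * deriv (f ∘ scaledExpQuantile lam a) s, fun t ht => ?_, ?_⟩
  · have hP : AbsolutelyContinuousOnInterval P 0 t :=
      (contDiff_mul_one_sub_rpow ha.le).contDiffOn.absolutelyContinuousOnInterval
    have hsub : uIcc 0 t ⊆ Ico 0 1 := by rw [uIcc_of_le ht.1]; exact Icc_subset_Ico_right ht.2
    have hfν := absolutelyContinuousOnInterval_comp_of_lipschitzOnWith hf_lip
      (contDiffOn_scaledExpQuantile lam a |>.mono (hsub.trans Ico_subset_Iio_self))
      ((mapsTo_scaledExpQuantile (by positivity)).mono_left hsub)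
    refine ⟨hP.intervalIntegrable_deriv_mul_add hfν, ?_⟩
    rw [hg_eq t ht.2]
    exact ((hP.integral_deriv_mul_eq_sub hfν).trans (by simp [hf0])).symm
  · have hC : 0 ≤ a ^ 2 * lam * (1 + (a - 1) / ((a - 2) * Real.exp 1)) := by
      have : 0 ≤ (a - 1) / ((a - 2) * Real.exp 1) :=
        div_nonneg (by linarith) (mul_nonneg (by linarith) (Real.exp_pos 1).le)
      positivity
    calc _ ≤ ENNReal.ofReal (a ^ 2 * lam * (1 + (a - 1) / ((a - 2) * Real.exp 1)) * K) := by
          rw [eLpNorm_exponent_top]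
          exact eLpNormEssSup_le_of_ae_bound (ae_restrict_of_forall_mem measurableSet_Ioo
            fun s hs => abs_deriv_mul_comp_scaledExpQuantile_le hlam ha hf_lip hf0 hs)
      _ = ENNReal.ofReal (a ^ 2 * lam * (1 + (a - 1) / ((a - 2) * Real.exp 1))) * K := by
          rw [ENNReal.ofReal_mul hC, ofReal_coe_nnreal]
      _ ≤ _ := by gcongr; exact coe_toNNReal_le_self
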